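/- arXiv:1409.1507 — 3 statements merged into one kernel-verified Lean document; each statement's English description precedes it below -/
import Mathlib

section
/- Let G be a countable amenable group and E ⊆ G a set of positive upper Banach density (positive upper density with respect to some Følner sequence). Then the difference set E E⁻¹ = {g h⁻¹ : g, h ∈ E} is left syndetic in G. -/
/-!
A translate `t • E` meets an almost invariant Følner set `F n` in about as many points as `E`
does, so pairwise disjoint translates `t • E`, `t ∈ T`, force `#T * upperDensity F E ≤ 1`.
Hence there is a pairwise disjoint family of translates of maximal size. By maximality every
`g • E` meets some `t • E`, i.e. `t⁻¹ * g ∈ E E⁻¹`, so the finitely many `t⁻¹` with `t ∈ T`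
witness left syndeticity.
-/

open Filter

/-- A (left) Følner sequence in a group. -/
def IsFolner {G : Type*} [Group G] [DecidableEq G] (F : ℕ → Finset G) : Prop :=
  Tendsto (fun n => (F n).card) atTop atTop ∧
    ∀ g : G, Tendsto (fun n => ((F n ∩ (F n).image (g * ·)).card : ℝ) / (F n).card)
      atTop (nhds 1)

/-- Upper density of `E ⊆ G` with respect to a sequence of finite sets. -/
noncomputable def upperDensity {G : Type*} [Group G] (F : ℕ → Finset G) (E : Set G) : ℝ :=
  Filter.limsup (fun n => ((E ∩ ↑(F n)).ncard : ℝ) / (F n).card) atTop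

/-- `S` is left syndetic: finitely many left translates `t⁻¹ S` cover `G`. -/
def LeftSyndetic {G : Type*} [Group G] (S : Set G) : Prop :=
  ∃ T : Finset G, ∀ g : G, ∃ t ∈ T, t * g ∈ S

open Finset Pointwise

lemma exists_max_card_of_card_le {α : Type*} {P : Finset α → Prop} (hP : ∃ T, P T) {N : ℕ}
    (hN : ∀ T, P T → #T ≤ N) : ∃ T, P T ∧ ∀ T', P T' → #T' ≤ #T := by
  have hne : {n | ∃ T, P T ∧ #T = n}.Nonempty := let ⟨T, hT⟩ := hP; ⟨_, T, hT, rfl⟩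
  have hbdd : BddAbove {n | ∃ T, P T ∧ #T = n} := ⟨N, by rintro _ ⟨T, hT, rfl⟩; exact hN T hT⟩
  obtain ⟨T, hT, hcard⟩ := Nat.sSup_mem hne hbdd
  exact ⟨T, hT, fun T' hT' => hcard ▸ le_csSup hbdd ⟨T', hT', rfl⟩⟩

section

variable {G : Type*} [Group G]

lemma inv_mul_mem_mul_inv_of_not_disjoint_smul {E : Set G} {g t : G}
    (h : ¬Disjoint (g • E) (t • E)) : t⁻¹ * g ∈ {x : G | ∃ a ∈ E, ∃ b ∈ E, x = a * b⁻¹} := by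
  obtain ⟨_, ⟨a, ha, rfl⟩, b, hb, hab⟩ := Set.not_disjoint_iff.1 h
  refine ⟨b, hb, a, ha, ?_⟩
  rw [eq_mul_inv_iff_mul_eq, mul_assoc, ← show t * b = g * a from hab, inv_mul_cancel_left]

theorem leftSyndetic_of_card_pairwiseDisjoint_smul_le {E : Set G} (hE : E.Nonempty) {N : ℕ}
    (hN : ∀ T : Finset G, (T : Set G).PairwiseDisjoint (· • E) → #T ≤ N) :
    LeftSyndetic {x : G | ∃ g ∈ E, ∃ h ∈ E, x = g * h⁻¹} := by
  classical
  obtain ⟨T, hT, hmax⟩ := exists_max_card_of_card_le ⟨∅, by simp⟩ hN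
  refine ⟨T.image (·⁻¹), fun g => ?_⟩
  by_contra! hg
  have hdisj : ∀ t ∈ T, Disjoint (g • E) (t • E) := fun t ht => by
    by_contra h
    exact hg _ (mem_image_of_mem _ ht) (inv_mul_mem_mul_inv_of_not_disjoint_smul h)
  have hgT : g ∉ T := fun hgT => hE.smul_set.ne_empty (disjoint_self.1 (hdisj g hgT))
  have hcard := hmax (insert g T) (by
    rw [coe_insert]
    exact hT.insert fun t ht _ => hdisj t ht)
  rw [card_insert_of_notMem hgT] at hcard
  omega

variable [DecidableEq G]

/- Left multiplication by `t` sends the points of `E ∩ F` whose image stays in `F` into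
`t • E ∩ F`; the remaining points lie in `F \ t⁻¹ F`. -/
open scoped Classical in
lemma card_filter_mem_le_card_filter_mem_smul_add (E : Set G) (F : Finset G) (t : G) :
    #{x ∈ F | x ∈ E} ≤ #{x ∈ F | x ∈ t • E} + #(F \ F.image (t⁻¹ * ·)) := by
  calc #{x ∈ F | x ∈ E}
      ≤ #({x ∈ F | x ∈ t • E}.image (t⁻¹ * ·) ∪ (F \ F.image (t⁻¹ * ·))) := by
        refine card_le_card fun x hx => ?_
        obtain ⟨hxF, hxE⟩ := mem_filter.1 hx
        by_cases hx' : x ∈ F.image (t⁻¹ * ·)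
        · obtain ⟨y, hy, rfl⟩ := mem_image.1 hx'
          refine mem_union_left _ (mem_image_of_mem _ (mem_filter.2 ⟨hy, ?_⟩))
          simpa [Set.mem_smul_set_iff_inv_smul_mem] using hxE
        · exact mem_union_right _ (mem_sdiff.2 ⟨hxF, hx'⟩)
    _ ≤ _ := (card_union_le _ _).trans (Nat.add_le_add_right card_image_le _)

open scoped Classical in
lemma sum_card_filter_mem_smul_le {E : Set G} {T : Finset G}
    (hT : (T : Set G).PairwiseDisjoint (· • E)) (F : Finset G) :
    ∑ t ∈ T, #{x ∈ F | x ∈ t • E} ≤ #F := by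
  rw [← card_biUnion]
  · exact card_le_card (biUnion_subset.2 fun t _ => filter_subset _ _)
  · exact fun t ht t' ht' hne =>
      disjoint_filter.2 fun _ _ hx hx' => Set.disjoint_left.1 (hT ht ht' hne) hx hx'

open scoped Classical in
lemma card_mul_card_filter_mem_le {E : Set G} {T : Finset G}
    (hT : (T : Set G).PairwiseDisjoint (· • E)) (F : Finset G) :
    #T * #{x ∈ F | x ∈ E} ≤ #F + ∑ t ∈ T, #(F \ F.image (t⁻¹ * ·)) :=
  calc #T * #{x ∈ F | x ∈ E} = ∑ _t ∈ T, #{x ∈ F | x ∈ E} := by rw [sum_const, smul_eq_mul]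
    _ ≤ ∑ t ∈ T, (#{x ∈ F | x ∈ t • E} + #(F \ F.image (t⁻¹ * ·))) :=
      sum_le_sum fun t _ => card_filter_mem_le_card_filter_mem_smul_add E F t
    _ ≤ _ := by
      rw [sum_add_distrib]
      exact Nat.add_le_add_right (sum_card_filter_mem_smul_le hT F) _

lemma IsFolner.tendsto_card_sdiff_div {F : ℕ → Finset G} (hF : IsFolner F) (g : G) :
    Tendsto (fun n => (#(F n \ (F n).image (g * ·)) : ℝ) / #(F n)) atTop (nhds 0) := by
  have h := (tendsto_const_nhds (x := (1 : ℝ))).sub (hF.2 g)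
  rw [sub_self] at h
  refine h.congr' ?_
  filter_upwards [hF.1.eventually_gt_atTop 0] with n hn
  rw [card_sdiff, Nat.cast_sub (card_le_card inter_subset_right), sub_div,
    div_self (by positivity), inter_comm]

theorem IsFolner.card_mul_upperDensity_le_one {F : ℕ → Finset G} (hF : IsFolner F)
    {E : Set G} {T : Finset G} (hT : (T : Set G).PairwiseDisjoint (· • E)) :
    #T * upperDensity F E ≤ 1 := by
  classical
  set a : ℕ → ℝ := fun n => ((E ∩ ↑(F n)).ncard : ℝ) / #(F n)
  set c : ℕ → ℝ := fun n => 1 + ∑ t ∈ T, (#(F n \ (F n).image (t⁻¹ * ·)) : ℝ) / #(F n)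
  have ha : ∀ n, a n = (#{x ∈ F n | x ∈ E} : ℝ) / #(F n) := fun n => by
    simp only [a, ← Set.ncard_coe_finset, coe_filter, Set.inter_comm E]
    rfl
  have ha0 : ∀ n, 0 ≤ a n := fun n => by positivity
  have ha1 : ∀ n, a n ≤ 1 := fun n => by
    rw [ha]
    exact div_le_one_of_le₀ (by exact_mod_cast card_filter_le _ _) (by positivity)
  have hac : ∀ n, #T * a n ≤ c n := fun n => by
    rw [ha, ← mul_div_assoc]
    calc (#T * #{x ∈ F n | x ∈ E} : ℝ) / #(F n)
        ≤ (#(F n) + ∑ t ∈ T, (#(F n \ (F n).image (t⁻¹ * ·)) : ℝ)) / #(F n) := by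
          gcongr
          exact_mod_cast card_mul_card_filter_mem_le hT (F n)
      _ ≤ c n := by
          rw [add_div, sum_div]
          exact add_le_add_left (div_self_le_one _) _
  have hc : Tendsto c atTop (nhds 1) := by
    have h := (tendsto_finsetSum T fun t _ => hF.tendsto_card_sdiff_div t⁻¹).const_add (1 : ℝ)
    rwa [sum_const_zero, add_zero] at h
  have hmono : Monotone fun x : ℝ => (#T : ℝ) * x :=
    fun _ _ h => mul_le_mul_of_nonneg_left h (by positivity)
  calc (#T : ℝ) * upperDensity F E = limsup (fun n => #T * a n) atTop :=
        hmono.map_limsup_of_continuousAt a (continuous_const.mul continuous_id).continuousAt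
          ⟨1, eventually_map.2 (Eventually.of_forall ha1)⟩ (isCoboundedUnder_le_of_le atTop ha0)
    _ ≤ limsup c atTop :=
        limsup_le_limsup (Eventually.of_forall hac)
          (isCoboundedUnder_le_of_le atTop fun n => mul_nonneg (by positivity) (ha0 n))
          hc.isBoundedUnder_le
    _ = 1 := hc.limsup_eq

end

theorem stmt2_general {G : Type*} [Group G] [DecidableEq G]
    (E : Set G) (F : ℕ → Finset G) (hF : IsFolner F) (hE : 0 < upperDensity F E) :
    LeftSyndetic {x : G | ∃ g ∈ E, ∃ h ∈ E, x = g * h⁻¹} := by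
  have hE_ne : E.Nonempty := Set.nonempty_iff_ne_empty.2 fun h => by simp [h, upperDensity] at hE
  refine leftSyndetic_of_card_pairwiseDisjoint_smul_le hE_ne (N := ⌊1 / upperDensity F E⌋₊)
    fun T hT => Nat.le_floor ?_
  rw [le_div_iff₀ hE]
  exact hF.card_mul_upperDensity_le_one hT

/-- If `E` has positive upper density with respect to some Følner sequence, then
`E E⁻¹` is left syndetic. -/
theorem stmt2 {G : Type*} [Group G] [Countable G] [DecidableEq G]
    (E : Set G) (F : ℕ → Finset G) (hF : IsFolner F) (hE : 0 < upperDensity F E) :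
    LeftSyndetic {x : G | ∃ g ∈ E, ∃ h ∈ E, x = g * h⁻¹} :=
  stmt2_general E F hF hE
end

section
/- Let F_q be a finite field of characteristic p. The ideal ⟨f₁(X₁),...,f_k(X_k)⟩ generated by nonzero single-variable polynomials f_i(X_i) in F_q[X₁,...,X_k] is an IP*-set in the additive group (F_q[X₁,...,X_k],+): it intersects every IP-set, i.e. for every injective sequence (g_n) of polynomials, some finite sum g_{n₁}+...+g_{n_m} over distinct indices lies in the ideal. -/
/-- The quotient by the ideal is a finite ring, and the key pigeonhole argument. -/
theorem stmt10_aux {K : Type*} [Field K] [Fintype K]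
    (k : ℕ) (f : Fin k → Polynomial K) (hf : ∀ i, f i ≠ 0) :
    Finite (MvPolynomial (Fin k) K ⧸ Ideal.span
      (Set.range fun i : Fin k =>
        Polynomial.aeval (MvPolynomial.X i : MvPolynomial (Fin k) K) (f i))) := by
  classical
  set F : Fin k → MvPolynomial (Fin k) K :=
    fun i => Polynomial.aeval (MvPolynomial.X i : MvPolynomial (Fin k) K) (f i) with hFdef
  set I : Ideal (MvPolynomial (Fin k) K) := Ideal.span (Set.range F) with hIdef
  let mk := Ideal.Quotient.mkₐ K I
  have hint : ∀ x ∈ Set.range (fun i : Fin k => mk (MvPolynomial.X i)), IsIntegral K x := by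
    rintro _ ⟨i, rfl⟩
    refine ⟨f i * Polynomial.C (f i).leadingCoeff⁻¹,
      Polynomial.monic_mul_leadingCoeff_inv (hf i), ?_⟩
    show (Polynomial.aeval (mk (MvPolynomial.X i)))
        (f i * Polynomial.C (f i).leadingCoeff⁻¹) = 0
    have h1 : (Polynomial.aeval (mk (MvPolynomial.X i)))
        (f i * Polynomial.C (f i).leadingCoeff⁻¹)
        = mk ((Polynomial.aeval (MvPolynomial.X i : MvPolynomial (Fin k) K))
            (f i * Polynomial.C (f i).leadingCoeff⁻¹)) :=
      (Polynomial.aeval_algHom_apply mk (MvPolynomial.X i) _)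
    rw [h1]
    have h2 : (Polynomial.aeval (MvPolynomial.X i : MvPolynomial (Fin k) K))
        (f i * Polynomial.C (f i).leadingCoeff⁻¹)
        = F i * MvPolynomial.C (f i).leadingCoeff⁻¹ := by
      simp [hFdef, MvPolynomial.algebraMap_eq]
    rw [h2]
    have hFI : F i ∈ I := Ideal.subset_span ⟨i, rfl⟩
    have : F i * MvPolynomial.C (f i).leadingCoeff⁻¹ ∈ I :=
      I.mul_mem_right _ hFI
    exact (Ideal.Quotient.eq_zero_iff_mem).2 this
  have hadj : Algebra.adjoin K (Set.range fun i : Fin k => mk (MvPolynomial.X i)) = ⊤ := by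
    have h1 : (Set.range fun i : Fin k => mk (MvPolynomial.X i))
        = mk '' (Set.range (MvPolynomial.X : Fin k → MvPolynomial (Fin k) K)) := by
      rw [← Set.range_comp]; rfl
    rw [h1, ← AlgHom.map_adjoin, MvPolynomial.adjoin_range_X, Algebra.map_top,
      AlgHom.range_eq_top]
    exact Ideal.Quotient.mkₐ_surjective K I
  have hfg : (⊤ : Submodule K (MvPolynomial (Fin k) K ⧸ I)).FG := by
    have := fg_adjoin_of_finite (Set.finite_range fun i : Fin k => mk (MvPolynomial.X i)) hint
    rwa [hadj, Algebra.top_toSubmodule] at this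
  have : Module.Finite K (MvPolynomial (Fin k) K ⧸ I) := ⟨hfg⟩
  exact Module.finite_of_finite K

/-- The ideal `⟨f₁(X₁),…,f_k(X_k)⟩` generated by nonzero single-variable
polynomials over a finite field is an IP*-set in `(F_q[X₁,…,X_k], +)`: it meets
the set of finite sums of every injective sequence. -/
theorem stmt10 {K : Type*} [Field K] [Fintype K]
    (k : ℕ) (f : Fin k → Polynomial K) (hf : ∀ i, f i ≠ 0)
    (g : ℕ → MvPolynomial (Fin k) K) (hg : Function.Injective g) :
    ∃ s : Finset ℕ, s.Nonempty ∧
      (∑ n ∈ s, g n) ∈ Ideal.span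
        (Set.range fun i : Fin k =>
          Polynomial.aeval (MvPolynomial.X i : MvPolynomial (Fin k) K) (f i)) := by
  classical
  set I : Ideal (MvPolynomial (Fin k) K) := Ideal.span
    (Set.range fun i : Fin k =>
      Polynomial.aeval (MvPolynomial.X i : MvPolynomial (Fin k) K) (f i)) with hIdef
  have hfin : Finite (MvPolynomial (Fin k) K ⧸ I) := stmt10_aux k f hf
  obtain ⟨a, b, hab, heq⟩ := Finite.exists_ne_map_eq_of_infinite
    (fun n : ℕ => Ideal.Quotient.mk I (∑ m ∈ Finset.range (n + 1), g m))
  have key : ∀ a b : ℕ, a < b →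
      Ideal.Quotient.mk I (∑ m ∈ Finset.range (a + 1), g m)
        = Ideal.Quotient.mk I (∑ m ∈ Finset.range (b + 1), g m) →
      ∃ s : Finset ℕ, s.Nonempty ∧ (∑ n ∈ s, g n) ∈ I := by
    intro a b h he
    refine ⟨Finset.Ico (a + 1) (b + 1), ?_, ?_⟩
    · rw [Finset.nonempty_Ico]; omega
    · have hsum : (∑ n ∈ Finset.Ico (a + 1) (b + 1), g n)
          = (∑ m ∈ Finset.range (b + 1), g m) - (∑ m ∈ Finset.range (a + 1), g m) :=
        Finset.sum_Ico_eq_sub _ (by omega)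
      rw [hsum]
      exact Ideal.Quotient.eq.mp he.symm
  rcases hab.lt_or_gt with h | h
  · exact key a b h heq
  · exact key b a h heq.symm
end

section
/- Let (U_g)_{g∈G} be a unitary representation of a group G on a Hilbert space H and suppose x ∈ H satisfies: for every ε > 0 the set {g ∈ G : ‖U_g x − x‖ < ε} is left syndetic in G. Then the orbit {U_g x : g ∈ G} is totally bounded. -/
/-- If for every `ε > 0` the return set `{g : ‖U_g x - x‖ < ε}` is left syndetic,
then the orbit of `x` under the unitary representation is totally bounded. -/
theorem stmt15 {G : Type*} [Group G] {H : Type*} [NormedAddCommGroup H]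
    [InnerProductSpace ℂ H] (U : G → H ≃ₗᵢ[ℂ] H)
    (hU : ∀ g h : G, ∀ v : H, U g (U h v) = U (g * h) v)
    (hU1 : ∀ v : H, U 1 v = v)
    (x : H) (hx : ∀ ε > (0 : ℝ), LeftSyndetic {g : G | ‖U g x - x‖ < ε}) :
    TotallyBounded (Set.range fun g => U g x) := by
  rw [Metric.totallyBounded_iff]
  intro ε hε
  obtain ⟨T, hT⟩ := hx ε hε
  refine ⟨(fun t => U t⁻¹ x) '' ↑T, T.finite_toSet.image _, ?_⟩
  rintro _ ⟨g, rfl⟩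
  obtain ⟨t, htT, hts⟩ := hT g
  refine Set.mem_iUnion₂.2 ⟨U t⁻¹ x, ⟨t, htT, rfl⟩, ?_⟩
  rw [Metric.mem_ball, dist_eq_norm]
  have key : U g x - U t⁻¹ x = U t⁻¹ (U (t * g) x - x) := by
    rw [map_sub, hU, inv_mul_cancel_left]
  rw [key, (U t⁻¹).norm_map]
  exact hts
end
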